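/- For n ≥ 50 and k ≤ √n, the quantity (1/(2(2n-2k+1))) · ∏_{j=1}^{k-1} (2n-4j)/(2n-2j+1) is at least 1/(9n). -/

import Mathlib

/-!
Writing each factor as `a / (a + b)` with `a = 2n - 4j`, `b = 2j + 1`, the inequality
`1 + b / a ≤ exp (b / a)` gives `exp (-(b / a)) ≤ a / (a + b)`. Since `j < k`, every `a` is at least
`2n - 4k + 4`, and `∑_{j<k} (2j + 1) = k²`, so the product is at least `exp (-k² / (2n - 4k + 4))`.
For `k² ≤ n` and `n ≥ 50` the exponent is at most `2/3`, and `exp (-2/3) ≥ (1 - 1/3)² = 4/9`.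
Finally `k ≥ 1` makes the prefactor at least `1 / (4n)`.
-/

open Finset Real

lemma Real.exp_neg_div_le_div_add {a b : ℝ} (ha : 0 < a) (hab : 0 < a + b) :
    exp (-(b / a)) ≤ a / (a + b) := by
  have hpos : 0 < 1 + b / a := by
    have : 0 < (a + b) / a := div_pos hab ha
    rwa [add_div, div_self ha.ne'] at this
  have hrw : a / (a + b) = (1 + b / a)⁻¹ := by field_simp
  rw [hrw, exp_neg]
  exact inv_anti₀ hpos (by linarith [add_one_le_exp (b / a)])

lemma sum_range_two_mul_add_one (k : ℕ) : ∑ j ∈ range k, (2 * (j : ℝ) + 1) = (k : ℝ) ^ 2 := by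
  induction k with
  | zero => simp
  | succ k ih =>
    rw [sum_range_succ, ih]
    push_cast
    ring

lemma exp_neg_sq_div_le_prod (n k : ℕ) (hk : 2 * k < n + 2) :
    exp (-((k : ℝ) ^ 2 / (2 * n - 4 * k + 4))) ≤
      ∏ j ∈ Icc 1 (k - 1), (2 * (n : ℝ) - 4 * j) / (2 * n - 2 * j + 1) := by
  set D : ℝ := 2 * n - 4 * k + 4
  have hD : 0 < D := by
    have : (2 * k : ℝ) < n + 2 := by exact_mod_cast hk
    linarith
  have hfactor : ∀ j ∈ Icc 1 (k - 1),
      exp (-((2 * (j : ℝ) + 1) / D)) ≤ (2 * (n : ℝ) - 4 * j) / (2 * n - 2 * j + 1) := by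
    intro j hj
    have hjk : (j : ℝ) + 1 ≤ k := by
      have : j + 1 ≤ k := by simp only [mem_Icc] at hj; omega
      exact_mod_cast this
    have hDj : D ≤ 2 * n - 4 * j := by linarith
    calc exp (-((2 * (j : ℝ) + 1) / D))
        ≤ exp (-((2 * (j : ℝ) + 1) / (2 * n - 4 * j))) := by
          gcongr
      _ ≤ (2 * (n : ℝ) - 4 * j) / ((2 * n - 4 * j) + (2 * j + 1)) :=
          exp_neg_div_le_div_add (by linarith) (by linarith)
      _ = (2 * (n : ℝ) - 4 * j) / (2 * n - 2 * j + 1) := by ring_nf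
  have hsum : ∑ j ∈ Icc 1 (k - 1), (2 * (j : ℝ) + 1) / D ≤ (k : ℝ) ^ 2 / D := by
    rw [← sum_div, ← sum_range_two_mul_add_one k]
    gcongr
    intro j hj
    simp only [mem_Icc] at hj
    simp only [mem_range]
    omega
  calc exp (-((k : ℝ) ^ 2 / D))
      ≤ exp (∑ j ∈ Icc 1 (k - 1), -((2 * (j : ℝ) + 1) / D)) := by
        rw [sum_neg_distrib]
        gcongr
    _ = ∏ j ∈ Icc 1 (k - 1), exp (-((2 * (j : ℝ) + 1) / D)) := exp_sum _ _
    _ ≤ _ := prod_le_prod (fun _ _ ↦ (exp_pos _).le) hfactor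

lemma three_mul_sq_add_eight_mul_le {n k : ℕ} (hn : 50 ≤ n) (hkn : k ^ 2 ≤ n) :
    3 * k ^ 2 + 8 * k ≤ 4 * n + 8 := by
  rcases le_or_gt k 7 with hk | hk
  · interval_cases k <;> omega
  · nlinarith

lemma four_ninths_le_prod {n k : ℕ} (hn : 50 ≤ n) (hkn : k ^ 2 ≤ n) :
    (4 : ℝ) / 9 ≤ ∏ j ∈ Icc 1 (k - 1), (2 * (n : ℝ) - 4 * j) / (2 * n - 2 * j + 1) := by
  have hkey : 3 * (k : ℝ) ^ 2 + 8 * k ≤ 4 * n + 8 := by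
    exact_mod_cast three_mul_sq_add_eight_mul_le hn hkn
  have hD : (0 : ℝ) < 2 * n - 4 * k + 4 := by nlinarith
  have hexponent : (k : ℝ) ^ 2 / (2 * n - 4 * k + 4) ≤ 2 / 3 := by
    rw [div_le_iff₀ hD]
    linarith
  calc (4 : ℝ) / 9 = (1 - (2 / 3) / (2 : ℕ)) ^ 2 := by norm_num
    _ ≤ exp (-(2 / 3)) := one_sub_div_pow_le_exp_neg (by norm_num)
    _ ≤ exp (-((k : ℝ) ^ 2 / (2 * n - 4 * k + 4))) := by gcongr
    _ ≤ _ := exp_neg_sq_div_le_prod n k (by nlinarith)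

open Finset in
/-- For integers `n ≥ 50` and `1 ≤ k ≤ √n`,
`(1/(2(2n-2k+1))) · ∏_{j=1}^{k-1} (2n-4j)/(2n-2j+1) ≥ 1/(9n)`. -/
theorem product_lower_bound (n k : ℕ) (hn : 50 ≤ n) (hk : 1 ≤ k)
    (hksqrt : (k : ℝ) ≤ Real.sqrt n) :
    1 / (9 * (n : ℝ)) ≤
      (1 / (2 * (2 * (n : ℝ) - 2 * k + 1))) *
        ∏ j ∈ Finset.Icc 1 (k - 1),
          (2 * (n : ℝ) - 4 * j) / (2 * (n : ℝ) - 2 * j + 1) := by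
  have hkn : k ^ 2 ≤ n := by
    exact_mod_cast (Real.le_sqrt (by positivity) (by positivity)).1 hksqrt
  have hn' : (50 : ℝ) ≤ n := by exact_mod_cast hn
  have hk' : (1 : ℝ) ≤ k := by exact_mod_cast hk
  have hkn' : (k : ℝ) ^ 2 ≤ n := by exact_mod_cast hkn
  have hprefactor : 1 / (4 * (n : ℝ)) ≤ 1 / (2 * (2 * (n : ℝ) - 2 * k + 1)) :=
    one_div_le_one_div_of_le (by nlinarith) (by linarith)
  calc 1 / (9 * (n : ℝ)) = 1 / (4 * n) * (4 / 9) := by field_simp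
    _ ≤ _ := mul_le_mul hprefactor (four_ninths_le_prod hn hkn) (by norm_num)
        (le_trans (by positivity) hprefactor)
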